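/- arXiv:2504.03562 — 2 statements merged into one kernel-verified Lean document; each statement's English description precedes it below -/
import Mathlib

section
/- Let ρ be a smooth defining function for a domain Ω ⊂ ℂⁿ near a boundary point, and let h be a smooth real-valued function. Define L_n^ρ = (1/|∂ρ|²) ∑_j (∂ρ/∂z̄_j) ∂/∂z_j, T_ρ = L_n^ρ − conj(L_n^ρ), σ_ρ = (1/2)(∂ρ − ∂̄ρ), and the D'Angelo form α_ρ = −ℒ_{T_ρ} σ_ρ (Lie derivative). Then for every vector field L of type (1,0) tangent to the level sets of ρ (and its conjugate L̄), one has α_{e^h ρ}(L̄) = α_ρ(L̄) + dh(L̄) and α_{e^h ρ}(L) = α_ρ(L) + dh(L); i.e., the D'Angelo forms of two defining functions differ on T^{1,0}(bΩ) ⊕ T^{0,1}(bΩ) by the differential of h. -/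
open Complex

noncomputable section

/-- Points of ℂⁿ. -/
abbrev Pt (n : ℕ) := Fin n → ℂ

/-- The `j`-th standard basis vector of ℂⁿ. -/
def ee {n : ℕ} (j : Fin n) : Pt n := Pi.single j 1

/-- The Wirtinger derivative ∂f/∂z_j. -/
def Dz {n : ℕ} (j : Fin n) (f : Pt n → ℂ) (z : Pt n) : ℂ :=
  (fderiv ℝ f z (ee j) - Complex.I * fderiv ℝ f z (Complex.I • ee j)) / 2

/-- The Wirtinger derivative ∂f/∂z̄_j. -/
def Dzbar {n : ℕ} (j : Fin n) (f : Pt n → ℂ) (z : Pt n) : ℂ :=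
  (fderiv ℝ f z (ee j) + Complex.I * fderiv ℝ f z (Complex.I • ee j)) / 2

/-- A (smooth, complex) vector field ∑ hol_j ∂/∂z_j + ∑ anti_j ∂/∂z̄_j on ℂⁿ,
given by its coefficient functions. -/
structure VF (n : ℕ) where
  hol : Fin n → Pt n → ℂ
  anti : Fin n → Pt n → ℂ

/-- A vector field applied to a function. -/
def VF.app {n : ℕ} (X : VF n) (f : Pt n → ℂ) (z : Pt n) : ℂ :=
  ∑ j, X.hol j z * Dz j f z + ∑ j, X.anti j z * Dzbar j f z

/-- The Lie bracket of two vector fields, in coordinates. -/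
def VF.bracket {n : ℕ} (X Y : VF n) : VF n :=
  ⟨fun j z => X.app (Y.hol j) z - Y.app (X.hol j) z,
   fun j z => X.app (Y.anti j) z - Y.app (X.anti j) z⟩

/-- The conjugate of a vector field. -/
def VF.conj' {n : ℕ} (X : VF n) : VF n :=
  ⟨fun j z => starRingEnd ℂ (X.anti j z), fun j z => starRingEnd ℂ (X.hol j z)⟩

/-- |∂ρ|² = ∑_j |∂ρ/∂z_j|². -/
def gradSq {n : ℕ} (ρ : Pt n → ℂ) (z : Pt n) : ℂ :=
  ∑ j, Dz j ρ z * starRingEnd ℂ (Dz j ρ z)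

/-- The complex normal field L_n^ρ = (1/|∂ρ|²) ∑_j (∂ρ/∂z̄_j) ∂/∂z_j. -/
def Lnf {n : ℕ} (ρ : Pt n → ℂ) : VF n :=
  ⟨fun j z => Dzbar j ρ z / gradSq ρ z, fun _ _ => 0⟩

/-- T_ρ = L_n^ρ − conj(L_n^ρ). -/
def Tf {n : ℕ} (ρ : Pt n → ℂ) : VF n :=
  ⟨fun j z => (Lnf ρ).hol j z, fun j z => - starRingEnd ℂ ((Lnf ρ).hol j z)⟩

/-- The 1-form σ_ρ = (1/2)(∂ρ − ∂̄ρ), applied to a vector field. -/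
def sigmaf {n : ℕ} (ρ : Pt n → ℂ) (X : VF n) (z : Pt n) : ℂ :=
  (∑ j, X.hol j z * Dz j ρ z - ∑ j, X.anti j z * Dzbar j ρ z) / 2

/-- The D'Angelo form α_ρ = −ℒ_{T_ρ} σ_ρ, applied to a vector field, via the formula
(ℒ_T σ)(X) = T(σ(X)) − σ([T,X]). -/
def alphaf {n : ℕ} (ρ : Pt n → ℂ) (X : VF n) (z : Pt n) : ℂ :=
  - (Tf ρ).app (sigmaf ρ X) z + sigmaf ρ ((Tf ρ).bracket X) z

/-- A vector field is smooth if all its coefficients are. -/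
def VF.Smooth {n : ℕ} (X : VF n) : Prop :=
  (∀ j, ContDiff ℝ (⊤ : ℕ∞) (X.hol j)) ∧ (∀ j, ContDiff ℝ (⊤ : ℕ∞) (X.anti j))

section DzLemmas

variable {n : ℕ} {f g : Pt n → ℂ} {z : Pt n} {j : Fin n}

lemma Dz_const (c : ℂ) : Dz j (fun _ => c) z = 0 := by
  simp [Dz]

lemma Dzbar_const (c : ℂ) : Dzbar j (fun _ => c) z = 0 := by
  simp [Dzbar]

lemma Dz_add (hf : DifferentiableAt ℝ f z) (hg : DifferentiableAt ℝ g z) :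
    Dz j (fun w => f w + g w) z = Dz j f z + Dz j g z := by
  simp only [Dz, fderiv_fun_add hf hg, ContinuousLinearMap.add_apply]; ring

lemma Dzbar_add (hf : DifferentiableAt ℝ f z) (hg : DifferentiableAt ℝ g z) :
    Dzbar j (fun w => f w + g w) z = Dzbar j f z + Dzbar j g z := by
  simp only [Dzbar, fderiv_fun_add hf hg, ContinuousLinearMap.add_apply]; ring

lemma Dz_sub (hf : DifferentiableAt ℝ f z) (hg : DifferentiableAt ℝ g z) :
    Dz j (fun w => f w - g w) z = Dz j f z - Dz j g z := by
  simp only [Dz, fderiv_fun_sub hf hg, ContinuousLinearMap.sub_apply]; ring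

lemma Dzbar_sub (hf : DifferentiableAt ℝ f z) (hg : DifferentiableAt ℝ g z) :
    Dzbar j (fun w => f w - g w) z = Dzbar j f z - Dzbar j g z := by
  simp only [Dzbar, fderiv_fun_sub hf hg, ContinuousLinearMap.sub_apply]; ring

lemma Dz_mul (hf : DifferentiableAt ℝ f z) (hg : DifferentiableAt ℝ g z) :
    Dz j (fun w => f w * g w) z = f z * Dz j g z + g z * Dz j f z := by
  simp only [Dz, fderiv_fun_mul hf hg, ContinuousLinearMap.add_apply,
    ContinuousLinearMap.smul_apply, smul_eq_mul]; ring

lemma Dzbar_mul (hf : DifferentiableAt ℝ f z) (hg : DifferentiableAt ℝ g z) :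
    Dzbar j (fun w => f w * g w) z = f z * Dzbar j g z + g z * Dzbar j f z := by
  simp only [Dzbar, fderiv_fun_mul hf hg, ContinuousLinearMap.add_apply,
    ContinuousLinearMap.smul_apply, smul_eq_mul]; ring

lemma Dz_div_const (hf : DifferentiableAt ℝ f z) (c : ℂ) :
    Dz j (fun w => f w / c) z = Dz j f z / c := by
  have e : (fun w => f w / c) = fun w => f w * c⁻¹ := by funext w; rw [div_eq_mul_inv]
  rw [e, Dz_mul hf (differentiableAt_const _), Dz_const]; ring

lemma Dzbar_div_const (hf : DifferentiableAt ℝ f z) (c : ℂ) :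
    Dzbar j (fun w => f w / c) z = Dzbar j f z / c := by
  have e : (fun w => f w / c) = fun w => f w * c⁻¹ := by funext w; rw [div_eq_mul_inv]
  rw [e, Dzbar_mul hf (differentiableAt_const _), Dzbar_const]; ring

lemma Dz_sum {ι : Type*} {s : Finset ι} {F : ι → Pt n → ℂ}
    (hF : ∀ i ∈ s, DifferentiableAt ℝ (F i) z) :
    Dz j (fun w => ∑ i ∈ s, F i w) z = ∑ i ∈ s, Dz j (F i) z := by
  simp only [Dz, fderiv_fun_sum hF, ContinuousLinearMap.sum_apply, Finset.mul_sum,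
    ← Finset.sum_sub_distrib, Finset.sum_div]

lemma Dzbar_sum {ι : Type*} {s : Finset ι} {F : ι → Pt n → ℂ}
    (hF : ∀ i ∈ s, DifferentiableAt ℝ (F i) z) :
    Dzbar j (fun w => ∑ i ∈ s, F i w) z = ∑ i ∈ s, Dzbar j (F i) z := by
  simp only [Dzbar, fderiv_fun_sum hF, ContinuousLinearMap.sum_apply, Finset.mul_sum,
    ← Finset.sum_add_distrib, Finset.sum_div]

lemma Dz_exp (hf : DifferentiableAt ℝ f z) :
    Dz j (fun w => Complex.exp (f w)) z = Complex.exp (f z) * Dz j f z := by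
  have h := (hf.hasFDerivAt.cexp).fderiv
  simp only [Dz, h, ContinuousLinearMap.smul_apply, smul_eq_mul]; ring

lemma Dzbar_exp (hf : DifferentiableAt ℝ f z) :
    Dzbar j (fun w => Complex.exp (f w)) z = Complex.exp (f z) * Dzbar j f z := by
  have h := (hf.hasFDerivAt.cexp).fderiv
  simp only [Dzbar, h, ContinuousLinearMap.smul_apply, smul_eq_mul]; ring

lemma fderiv_conj (hf : DifferentiableAt ℝ f z) :
    fderiv ℝ (fun w => starRingEnd ℂ (f w)) z
      = (Complex.conjCLE.toContinuousLinearMap).comp (fderiv ℝ f z) := by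
  have : (fun w => starRingEnd ℂ (f w)) = (Complex.conjCLE.toContinuousLinearMap) ∘ f := rfl
  rw [this, (Complex.conjCLE.toContinuousLinearMap.hasFDerivAt.comp z hf.hasFDerivAt).fderiv]

lemma Dz_conj (hf : DifferentiableAt ℝ f z) :
    Dz j (fun w => starRingEnd ℂ (f w)) z = starRingEnd ℂ (Dzbar j f z) := by
  simp only [Dz, Dzbar, fderiv_conj hf, ContinuousLinearMap.coe_comp', Function.comp_apply,
    ContinuousLinearEquiv.coe_coe, Complex.conjCLE_apply, map_div₀, map_add, map_mul,
    Complex.conj_I, map_ofNat]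
  ring

lemma Dzbar_conj (hf : DifferentiableAt ℝ f z) :
    Dzbar j (fun w => starRingEnd ℂ (f w)) z = starRingEnd ℂ (Dz j f z) := by
  simp only [Dz, Dzbar, fderiv_conj hf, ContinuousLinearMap.coe_comp', Function.comp_apply,
    ContinuousLinearEquiv.coe_coe, Complex.conjCLE_apply, map_div₀, map_sub, map_mul,
    Complex.conj_I, map_ofNat]
  ring

lemma contDiff_Dz (hf : ContDiff ℝ (⊤ : ℕ∞) f) : ContDiff ℝ (⊤ : ℕ∞) (fun z => Dz j f z) := by
  have h1 : ContDiff ℝ (⊤ : ℕ∞) (fderiv ℝ f) := hf.fderiv_right (by simp)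
  have h2 : ContDiff ℝ (⊤ : ℕ∞) (fun z => fderiv ℝ f z (ee j)) := h1.clm_apply contDiff_const
  have h3 : ContDiff ℝ (⊤ : ℕ∞) (fun z => fderiv ℝ f z (Complex.I • ee j)) := h1.clm_apply contDiff_const
  exact (h2.sub (contDiff_const.mul h3)).div_const 2

lemma contDiff_Dzbar (hf : ContDiff ℝ (⊤ : ℕ∞) f) : ContDiff ℝ (⊤ : ℕ∞) (fun z => Dzbar j f z) := by
  have h1 : ContDiff ℝ (⊤ : ℕ∞) (fderiv ℝ f) := hf.fderiv_right (by simp)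
  have h2 : ContDiff ℝ (⊤ : ℕ∞) (fun z => fderiv ℝ f z (ee j)) := h1.clm_apply contDiff_const
  have h3 : ContDiff ℝ (⊤ : ℕ∞) (fun z => fderiv ℝ f z (Complex.I • ee j)) := h1.clm_apply contDiff_const
  exact (h2.add (contDiff_const.mul h3)).div_const 2

lemma contDiff_conj (hf : ContDiff ℝ (⊤ : ℕ∞) f) : ContDiff ℝ (⊤ : ℕ∞) (fun z => starRingEnd ℂ (f z)) :=
  Complex.conjCLE.toContinuousLinearMap.contDiff.comp hf

end DzLemmas

section VFLemmas

variable {n : ℕ} {X : VF n} {f g : Pt n → ℂ} {z : Pt n} {j' : Fin n}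

lemma VF.app_const (c : ℂ) : X.app (fun _ => c) z = 0 := by
  simp [VF.app, Dz_const, Dzbar_const]

lemma VF.app_add (hf : DifferentiableAt ℝ f z) (hg : DifferentiableAt ℝ g z) :
    X.app (fun w => f w + g w) z = X.app f z + X.app g z := by
  simp only [VF.app, Dz_add hf hg, Dzbar_add hf hg, mul_add, Finset.sum_add_distrib]; ring

lemma Dz_neg' : Dz j' (fun w => -f w) z = -Dz j' f z := by
  simp only [Dz, fderiv_fun_neg, ContinuousLinearMap.neg_apply]; ring

lemma Dzbar_neg' : Dzbar j' (fun w => -f w) z = -Dzbar j' f z := by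
  simp only [Dzbar, fderiv_fun_neg, ContinuousLinearMap.neg_apply]; ring

lemma VF.app_neg :
    X.app (fun w => -f w) z = - X.app f z := by
  simp only [VF.app, Dz_neg', Dzbar_neg', mul_neg, Finset.sum_neg_distrib]; ring

lemma VF.app_mul (hf : DifferentiableAt ℝ f z) (hg : DifferentiableAt ℝ g z) :
    X.app (fun w => f w * g w) z = f z * X.app g z + g z * X.app f z := by
  have h1 : ∀ (c : Fin n → ℂ) (u v : Fin n → ℂ),
      ∑ j, c j * (f z * u j + g z * v j)
        = f z * ∑ j, c j * u j + g z * ∑ j, c j * v j := by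
    intro c u v
    rw [Finset.mul_sum, Finset.mul_sum, ← Finset.sum_add_distrib]
    exact Finset.sum_congr rfl fun j _ => by ring
  simp only [VF.app, Dz_mul hf hg, Dzbar_mul hf hg, h1]; ring

lemma VF.app_div_const (hf : DifferentiableAt ℝ f z) (c : ℂ) :
    X.app (fun w => f w / c) z = X.app f z / c := by
  simp only [VF.app, Dz_div_const hf c, Dzbar_div_const hf c, ← mul_div_assoc,
    ← Finset.sum_div, ← add_div]

lemma VF.app_sub (hf : DifferentiableAt ℝ f z) (hg : DifferentiableAt ℝ g z) :
    X.app (fun w => f w - g w) z = X.app f z - X.app g z := by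
  simp only [VF.app, Dz_sub hf hg, Dzbar_sub hf hg, mul_sub, Finset.sum_sub_distrib]; ring

lemma VF.app_sum {ι : Type*} {s : Finset ι} {F : ι → Pt n → ℂ}
    (hF : ∀ i ∈ s, DifferentiableAt ℝ (F i) z) :
    X.app (fun w => ∑ i ∈ s, F i w) z = ∑ i ∈ s, X.app (F i) z := by
  simp only [VF.app, Dz_sum hF, Dzbar_sum hF, Finset.mul_sum, Finset.sum_add_distrib]
  exact congrArg₂ (· + ·) Finset.sum_comm Finset.sum_comm

lemma VF.app_sum_mul (X : VF n) {u v : Fin n → Pt n → ℂ}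
    (hu : ∀ j, DifferentiableAt ℝ (u j) z) (hv : ∀ j, DifferentiableAt ℝ (v j) z) :
    X.app (fun w => ∑ j, u j w * v j w) z
      = ∑ j, u j z * X.app (v j) z + ∑ j, X.app (u j) z * v j z := by
  rw [VF.app_sum (F := fun i w => u i w * v i w) (fun i _ => (hu i).mul (hv i)), ← Finset.sum_add_distrib]
  exact Finset.sum_congr rfl fun j _ => by rw [VF.app_mul (hu j) (hv j)]; ring

lemma VF.app_exp (hf : DifferentiableAt ℝ f z) :
    X.app (fun w => Complex.exp (f w)) z = Complex.exp (f z) * X.app f z := by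
  have h1 : ∀ (c u : Fin n → ℂ), ∑ j, c j * (Complex.exp (f z) * u j)
      = Complex.exp (f z) * ∑ j, c j * u j := by
    intro c u; rw [Finset.mul_sum]; exact Finset.sum_congr rfl fun j _ => by ring
  simp only [VF.app, Dz_exp hf, Dzbar_exp hf, h1]; ring

end VFLemmas

section Defining

variable {n : ℕ} {r : Pt n → ℂ} {z : Pt n}

lemma Dzbar_eq_conj_Dz (hr : ContDiff ℝ (⊤ : ℕ∞) r) (hreal : ∀ w, (r w).im = 0) (j : Fin n) (w : Pt n) :
    Dzbar j r w = starRingEnd ℂ (Dz j r w) := by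
  have e : r = fun u => starRingEnd ℂ (r u) := by
    funext u; rw [Complex.conj_eq_iff_im.2 (hreal u)]
  conv_lhs => rw [e]
  exact Dzbar_conj ((hr.differentiable (by simp)) w)

lemma contDiff_gradSq (hr : ContDiff ℝ (⊤ : ℕ∞) r) : ContDiff ℝ (⊤ : ℕ∞) (gradSq r) := by
  have e : gradSq r = fun w => ∑ j, Dz j r w * starRingEnd ℂ (Dz j r w) := rfl
  rw [e]
  exact ContDiff.sum fun j _ => (contDiff_Dz hr).mul (contDiff_conj (contDiff_Dz hr))

lemma contDiff_inv_gradSq (hr : ContDiff ℝ (⊤ : ℕ∞) r) (hgrad : ∀ w, gradSq r w ≠ 0) :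
    ContDiff ℝ (⊤ : ℕ∞) (fun w => (gradSq r w)⁻¹) := by
  rw [contDiff_iff_contDiffAt]
  intro w
  exact ((contDiffAt_inv ℂ (hgrad w)).restrict_scalars ℝ).comp w (contDiff_gradSq hr).contDiffAt

lemma contDiff_Lnf_hol (hr : ContDiff ℝ (⊤ : ℕ∞) r) (hgrad : ∀ w, gradSq r w ≠ 0) (j : Fin n) :
    ContDiff ℝ (⊤ : ℕ∞) ((Lnf r).hol j) := by
  have e : (Lnf r).hol j = fun w => Dzbar j r w * (gradSq r w)⁻¹ := by
    funext w; exact div_eq_mul_inv _ _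
  rw [e]
  exact (contDiff_Dzbar hr).mul (contDiff_inv_gradSq hr hgrad)

lemma conj_gradSq (w : Pt n) : starRingEnd ℂ (gradSq r w) = gradSq r w := by
  simp only [gradSq, map_sum, map_mul, Complex.conj_conj]
  exact Finset.sum_congr rfl fun j _ => mul_comm _ _

lemma sum_t_a (hr : ContDiff ℝ (⊤ : ℕ∞) r) (hreal : ∀ w, (r w).im = 0)
    (hgrad : ∀ w, gradSq r w ≠ 0) (w : Pt n) :
    ∑ j, (Lnf r).hol j w * Dz j r w = 1 := by
  have e : ∀ j : Fin n, (Lnf r).hol j w * Dz j r w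
      = (Dz j r w * starRingEnd ℂ (Dz j r w)) / gradSq r w := by
    intro j
    show (Dzbar j r w / gradSq r w) * Dz j r w = _
    rw [Dzbar_eq_conj_Dz hr hreal]; ring
  rw [Finset.sum_congr rfl fun j _ => e j, ← Finset.sum_div]
  exact div_self (hgrad w)

lemma sum_ct_b (hr : ContDiff ℝ (⊤ : ℕ∞) r) (hreal : ∀ w, (r w).im = 0)
    (hgrad : ∀ w, gradSq r w ≠ 0) (w : Pt n) :
    ∑ j, starRingEnd ℂ ((Lnf r).hol j w) * Dzbar j r w = 1 := by
  have e : ∀ j : Fin n, starRingEnd ℂ ((Lnf r).hol j w) * Dzbar j r w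
      = (Dz j r w * starRingEnd ℂ (Dz j r w)) / gradSq r w := by
    intro j
    show starRingEnd ℂ (Dzbar j r w / gradSq r w) * Dzbar j r w = _
    rw [map_div₀, conj_gradSq, Dzbar_eq_conj_Dz hr hreal, Complex.conj_conj]; ring
  rw [Finset.sum_congr rfl fun j _ => e j, ← Finset.sum_div]
  exact div_self (hgrad w)

theorem alphaf_eq (r : Pt n → ℂ) (Y : VF n) (z : Pt n)
    (hr : ContDiff ℝ (⊤ : ℕ∞) r) (hreal : ∀ w, (r w).im = 0) (hgrad : ∀ w, gradSq r w ≠ 0)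
    (hY : VF.Smooth Y) :
    alphaf r Y z =
      (-∑ j, Y.hol j z * (Tf r).app (fun w => Dz j r w) z
       + ∑ j, (Lnf r).hol j z * Y.app (fun w => Dz j r w) z
       + ∑ j, Y.anti j z * (Tf r).app (fun w => Dzbar j r w) z
       + ∑ j, starRingEnd ℂ ((Lnf r).hol j z) * Y.app (fun w => Dzbar j r w) z) / 2 := by
  obtain ⟨hYh, hYa⟩ := hY
  have da : ∀ j : Fin n, DifferentiableAt ℝ (fun w => Dz j r w) z :=
    fun j => ((contDiff_Dz hr).differentiable (by simp)) z
  have db : ∀ j : Fin n, DifferentiableAt ℝ (fun w => Dzbar j r w) z :=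
    fun j => ((contDiff_Dzbar hr).differentiable (by simp)) z
  have dt : ∀ j : Fin n, DifferentiableAt ℝ ((Lnf r).hol j) z :=
    fun j => ((contDiff_Lnf_hol hr hgrad j).differentiable (by simp)) z
  have dct : ∀ j : Fin n, DifferentiableAt ℝ (fun w => starRingEnd ℂ ((Lnf r).hol j w)) z :=
    fun j => ((contDiff_conj (contDiff_Lnf_hol hr hgrad j)).differentiable (by simp)) z
  have dYh : ∀ j, DifferentiableAt ℝ (Y.hol j) z := fun j => ((hYh j).differentiable (by simp)) z
  have dYa : ∀ j, DifferentiableAt ℝ (Y.anti j) z := fun j => ((hYa j).differentiable (by simp)) z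
  have dSh : DifferentiableAt ℝ (fun w => ∑ j, Y.hol j w * Dz j r w) z :=
    DifferentiableAt.fun_sum (fun j _ => (dYh j).mul (da j))
  have dSa : DifferentiableAt ℝ (fun w => ∑ j, Y.anti j w * Dzbar j r w) z :=
    DifferentiableAt.fun_sum (fun j _ => (dYa j).mul (db j))
  have H1 := VF.app_sum_mul (Tf r) dYh da
  have H3 := VF.app_sum_mul (Tf r) dYa db
  have H2 := VF.app_sum_mul Y dt da
  have H4 := VF.app_sum_mul Y dct db
  have e1 : (fun w => ∑ j, (Lnf r).hol j w * Dz j r w) = fun _ => (1:ℂ) :=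
    funext (sum_t_a hr hreal hgrad)
  have e2 : (fun w => ∑ j, starRingEnd ℂ ((Lnf r).hol j w) * Dzbar j r w) = fun _ => (1:ℂ) :=
    funext (sum_ct_b hr hreal hgrad)
  rw [e1, VF.app_const] at H2
  rw [e2, VF.app_const] at H4
  have hσ : (Tf r).app (sigmaf r Y) z
      = ((Tf r).app (fun w => ∑ j, Y.hol j w * Dz j r w) z
         - (Tf r).app (fun w => ∑ j, Y.anti j w * Dzbar j r w) z)/2 := by
    have e : sigmaf r Y = fun w =>
        ((∑ j, Y.hol j w * Dz j r w) - (∑ j, Y.anti j w * Dzbar j r w))/2 := rfl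
    rw [e, VF.app_div_const (dSh.fun_sub dSa), VF.app_sub dSh dSa]
  have expand : alphaf r Y z
      = -(Tf r).app (sigmaf r Y) z
        + ((∑ j, ((Tf r).app (Y.hol j) z - Y.app ((Lnf r).hol j) z) * Dz j r z)
           - ∑ j, ((Tf r).app (Y.anti j) z
              - Y.app (fun w => -starRingEnd ℂ ((Lnf r).hol j w)) z) * Dzbar j r z)/2 := rfl
  rw [expand, hσ]
  have hneg : ∀ j : Fin n, Y.app (fun w => -starRingEnd ℂ ((Lnf r).hol j w)) z
      = - Y.app (fun w => starRingEnd ℂ ((Lnf r).hol j w)) z := fun j => VF.app_neg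
  simp only [hneg, sub_neg_eq_add, sub_mul, add_mul, Finset.sum_sub_distrib,
    Finset.sum_add_distrib]
  linear_combination (- H1 + H3 + H2 + H4)/2

end Defining

section TfApp

variable {n : ℕ}

lemma Tf_app_eq (r : Pt n → ℂ) (f : Pt n → ℂ) (z : Pt n) :
    (Tf r).app f z = ∑ j, (Lnf r).hol j z * Dz j f z
      - ∑ j, starRingEnd ℂ ((Lnf r).hol j z) * Dzbar j f z := by
  simp only [VF.app, Tf, neg_mul, Finset.sum_neg_distrib, ← sub_eq_add_neg]

end TfApp

/-- The D'Angelo forms of two defining functions ρ and e^h ρ differ, on tangential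
(1,0)- and (0,1)-vectors at a boundary point, by the differential of h:
α_{e^hρ}(L̄) = α_ρ(L̄) + dh(L̄) and α_{e^hρ}(L) = α_ρ(L) + dh(L). -/
theorem stmt4 {n : ℕ} (ρ h : Pt n → ℂ) (L : VF n) (P : Pt n)
    (hρ : ContDiff ℝ (⊤ : ℕ∞) ρ) (hh : ContDiff ℝ (⊤ : ℕ∞) h)
    (hρreal : ∀ z, (ρ z).im = 0) (hhreal : ∀ z, (h z).im = 0)
    (hgrad : ∀ z, gradSq ρ z ≠ 0)
    (hgrad' : ∀ z, gradSq (fun w => Complex.exp (h w) * ρ w) z ≠ 0)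
    (hLsmooth : ∀ j, ContDiff ℝ (⊤ : ℕ∞) (L.hol j)) (hL10 : ∀ j z, L.anti j z = 0)
    (htang : ∀ z, L.app ρ z = 0)
    (hP : ρ P = 0) :
    alphaf (fun w => Complex.exp (h w) * ρ w) L.conj' P
        = alphaf ρ L.conj' P + ∑ j, L.conj'.anti j P * Dzbar j h P
    ∧ alphaf (fun w => Complex.exp (h w) * ρ w) L P
        = alphaf ρ L P + ∑ j, L.hol j P * Dz j h P := by
  set ρt : Pt n → ℂ := fun w => Complex.exp (h w) * ρ w with hρtdef
  have hgz : ∀ w : Pt n, Complex.exp (h w) ≠ 0 := fun w => Complex.exp_ne_zero _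
  have hhconj : ∀ w, starRingEnd ℂ (h w) = h w := fun w => Complex.conj_eq_iff_im.2 (hhreal w)
  have hρconj : ∀ w, starRingEnd ℂ (ρ w) = ρ w := fun w => Complex.conj_eq_iff_im.2 (hρreal w)
  have hgconj : ∀ w : Pt n, starRingEnd ℂ (Complex.exp (h w)) = Complex.exp (h w) := by
    intro w; rw [← Complex.exp_conj, hhconj]
  have hρtreal : ∀ w, (ρt w).im = 0 := by
    intro w
    rw [← Complex.conj_eq_iff_im]
    show starRingEnd ℂ (Complex.exp (h w) * ρ w) = Complex.exp (h w) * ρ w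
    rw [map_mul, hgconj, hρconj]
  have hdh : Differentiable ℝ h := hh.differentiable (by simp)
  have hdρ : Differentiable ℝ ρ := hρ.differentiable (by simp)
  have hgsm : ContDiff ℝ (⊤ : ℕ∞) (fun w => Complex.exp (h w)) := hh.cexp
  have hρtsm : ContDiff ℝ (⊤ : ℕ∞) ρt := hgsm.mul hρ
  have hLs : L.Smooth := ⟨hLsmooth, fun j => by
    have e : L.anti j = fun _ => 0 := funext (hL10 j)
    rw [e]; exact contDiff_const⟩
  have hc0 : ∀ j (w : Pt n), L.conj'.hol j w = 0 := by
    intro j w; show starRingEnd ℂ (L.anti j w) = 0; rw [hL10]; simp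
  have hMa : ∀ j (w : Pt n), L.conj'.anti j w = starRingEnd ℂ (L.hol j w) := fun j w => rfl
  have hLcs : L.conj'.Smooth := by
    constructor
    · intro j
      have e : L.conj'.hol j = fun _ => 0 := funext (hc0 j)
      rw [e]; exact contDiff_const
    · intro j
      have e : L.conj'.anti j = fun w => starRingEnd ℂ (L.hol j w) := funext (hMa j)
      rw [e]; exact contDiff_conj (hLsmooth j)
  have htangL : ∀ w, ∑ j, L.hol j w * Dz j ρ w = 0 := by
    intro w
    have e := htang w
    simpa [VF.app, hL10] using e
  have htangM : ∀ w, ∑ j, starRingEnd ℂ (L.hol j w) * Dzbar j ρ w = 0 := by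
    intro w
    have e : ∀ j : Fin n, starRingEnd ℂ (L.hol j w) * Dzbar j ρ w
        = starRingEnd ℂ (L.hol j w * Dz j ρ w) := by
      intro j; rw [map_mul, Dzbar_eq_conj_Dz hρ hρreal]
    rw [Finset.sum_congr rfl fun j _ => e j, ← map_sum, htangL w, map_zero]
  have hta : ∀ j : Fin n, (fun w => Dz j ρt w)
      = fun w => Complex.exp (h w) * (Dz j h w * ρ w + Dz j ρ w) := by
    intro j; funext w
    show Dz j (fun u => Complex.exp (h u) * ρ u) w = _
    rw [Dz_mul ((hdh w).cexp) (hdρ w), Dz_exp (hdh w)]; ring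
  have htb : ∀ j : Fin n, (fun w => Dzbar j ρt w)
      = fun w => Complex.exp (h w) * (Dzbar j h w * ρ w + Dzbar j ρ w) := by
    intro j; funext w
    show Dzbar j (fun u => Complex.exp (h u) * ρ u) w = _
    rw [Dzbar_mul ((hdh w).cexp) (hdρ w), Dzbar_exp (hdh w)]; ring
  have htaP : ∀ j, Dz j ρt P = Complex.exp (h P) * Dz j ρ P := by
    intro j; rw [congrFun (hta j) P, hP]; ring
  have htbP : ∀ j, Dzbar j ρt P = Complex.exp (h P) * Dzbar j ρ P := by
    intro j; rw [congrFun (htb j) P, hP]; ring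
  have hGP : gradSq ρt P = Complex.exp (h P) * Complex.exp (h P) * gradSq ρ P := by
    show ∑ j, Dz j ρt P * starRingEnd ℂ (Dz j ρt P) = _
    have e : ∀ j : Fin n, Dz j ρt P * starRingEnd ℂ (Dz j ρt P)
        = Complex.exp (h P) * Complex.exp (h P) * (Dz j ρ P * starRingEnd ℂ (Dz j ρ P)) := by
      intro j; rw [htaP j, map_mul, hgconj]; ring
    rw [Finset.sum_congr rfl fun j _ => e j, ← Finset.mul_sum]
    rfl
  have httP : ∀ j, (Lnf ρt).hol j P = (Lnf ρ).hol j P / Complex.exp (h P) := by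
    intro j
    show Dzbar j ρt P / gradSq ρt P = (Dzbar j ρ P / gradSq ρ P) / Complex.exp (h P)
    rw [htbP j, hGP]
    have h1 := hgrad P
    have h2 := hgz P
    field_simp
  have hTtP : ∀ f : Pt n → ℂ, (Tf ρt).app f P = (Tf ρ).app f P / Complex.exp (h P) := by
    intro f
    rw [Tf_app_eq, Tf_app_eq]
    simp only [httP, map_div₀, hgconj P, div_mul_eq_mul_div, ← Finset.sum_div, ← sub_div]
  have hTρρ : (Tf ρ).app ρ P = 0 := by
    rw [Tf_app_eq, sum_t_a hρ hρreal hgrad, sum_ct_b hρ hρreal hgrad, sub_self]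
  have dcexp : DifferentiableAt ℝ (fun w => Complex.exp (h w)) P := (hdh P).cexp
  have dhj : ∀ j : Fin n, DifferentiableAt ℝ (fun w => Dz j h w) P :=
    fun j => ((contDiff_Dz hh).differentiable (by simp)) P
  have dkj : ∀ j : Fin n, DifferentiableAt ℝ (fun w => Dzbar j h w) P :=
    fun j => ((contDiff_Dzbar hh).differentiable (by simp)) P
  have daj : ∀ j : Fin n, DifferentiableAt ℝ (fun w => Dz j ρ w) P :=
    fun j => ((contDiff_Dz hρ).differentiable (by simp)) P
  have dbj : ∀ j : Fin n, DifferentiableAt ℝ (fun w => Dzbar j ρ w) P :=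
    fun j => ((contDiff_Dzbar hρ).differentiable (by simp)) P
  have KEY1 : ∀ (X : VF n), X.app ρ P = 0 → ∀ j : Fin n,
      X.app (fun w => Dz j ρt w) P
        = Complex.exp (h P) * (X.app h P * Dz j ρ P + X.app (fun w => Dz j ρ w) P) := by
    intro X hX j
    rw [hta j]
    rw [VF.app_mul dcexp (((dhj j).fun_mul (hdρ P)).fun_add (daj j))]
    rw [VF.app_add ((dhj j).fun_mul (hdρ P)) (daj j)]
    rw [VF.app_mul (dhj j) (hdρ P)]
    rw [VF.app_exp (hdh P)]
    rw [hP, hX]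
    ring
  have KEY2 : ∀ (X : VF n), X.app ρ P = 0 → ∀ j : Fin n,
      X.app (fun w => Dzbar j ρt w) P
        = Complex.exp (h P) * (X.app h P * Dzbar j ρ P + X.app (fun w => Dzbar j ρ w) P) := by
    intro X hX j
    rw [htb j]
    rw [VF.app_mul dcexp (((dkj j).fun_mul (hdρ P)).fun_add (dbj j))]
    rw [VF.app_add ((dkj j).fun_mul (hdρ P)) (dbj j)]
    rw [VF.app_mul (dkj j) (hdρ P)]
    rw [VF.app_exp (hdh P)]
    rw [hP, hX]
    ring
  have hMρ : VF.app L.conj' ρ P = 0 := by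
    show ∑ j, L.conj'.hol j P * Dz j ρ P + ∑ j, L.conj'.anti j P * Dzbar j ρ P = 0
    simp only [hc0, zero_mul, Finset.sum_const_zero, zero_add, hMa]
    exact htangM P
  constructor
  · -- the L̄ case
    rw [alphaf_eq ρt L.conj' P hρtsm hρtreal hgrad' hLcs,
        alphaf_eq ρ L.conj' P hρ hρreal hgrad hLcs]
    simp only [hc0, hMa, zero_mul, Finset.sum_const_zero, neg_zero, zero_add]
    have T1 : ∀ j : Fin n, (Tf ρt).app (fun w => Dzbar j ρt w) P
        = (Tf ρ).app h P * Dzbar j ρ P + (Tf ρ).app (fun w => Dzbar j ρ w) P := by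
      intro j
      rw [hTtP, KEY2 (Tf ρ) hTρρ j]
      exact mul_div_cancel_left₀ _ (hgz P)
    have T2 : ∀ j : Fin n, (Lnf ρt).hol j P * VF.app L.conj' (fun w => Dz j ρt w) P
        = (Lnf ρ).hol j P
          * (VF.app L.conj' h P * Dz j ρ P + VF.app L.conj' (fun w => Dz j ρ w) P) := by
      intro j
      rw [httP, KEY1 L.conj' hMρ j]
      field_simp
    have T4 : ∀ j : Fin n, starRingEnd ℂ ((Lnf ρt).hol j P)
          * VF.app L.conj' (fun w => Dzbar j ρt w) P
        = starRingEnd ℂ ((Lnf ρ).hol j P)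
          * (VF.app L.conj' h P * Dzbar j ρ P + VF.app L.conj' (fun w => Dzbar j ρ w) P) := by
      intro j
      rw [httP, map_div₀, hgconj, KEY2 L.conj' hMρ j]
      field_simp
    simp only [T1, T2, T4]
    have S1 : ∑ j, starRingEnd ℂ (L.hol j P)
          * ((Tf ρ).app h P * Dzbar j ρ P + (Tf ρ).app (fun w => Dzbar j ρ w) P)
        = (Tf ρ).app h P * ∑ j, starRingEnd ℂ (L.hol j P) * Dzbar j ρ P
          + ∑ j, starRingEnd ℂ (L.hol j P) * (Tf ρ).app (fun w => Dzbar j ρ w) P := by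
      rw [Finset.mul_sum, ← Finset.sum_add_distrib]
      exact Finset.sum_congr rfl fun j _ => by ring
    have S2 : ∑ j, (Lnf ρ).hol j P
          * (VF.app L.conj' h P * Dz j ρ P + VF.app L.conj' (fun w => Dz j ρ w) P)
        = VF.app L.conj' h P * ∑ j, (Lnf ρ).hol j P * Dz j ρ P
          + ∑ j, (Lnf ρ).hol j P * VF.app L.conj' (fun w => Dz j ρ w) P := by
      rw [Finset.mul_sum, ← Finset.sum_add_distrib]
      exact Finset.sum_congr rfl fun j _ => by ring
    have S4 : ∑ j, starRingEnd ℂ ((Lnf ρ).hol j P)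
          * (VF.app L.conj' h P * Dzbar j ρ P + VF.app L.conj' (fun w => Dzbar j ρ w) P)
        = VF.app L.conj' h P * ∑ j, starRingEnd ℂ ((Lnf ρ).hol j P) * Dzbar j ρ P
          + ∑ j, starRingEnd ℂ ((Lnf ρ).hol j P) * VF.app L.conj' (fun w => Dzbar j ρ w) P := by
      rw [Finset.mul_sum, ← Finset.sum_add_distrib]
      exact Finset.sum_congr rfl fun j _ => by ring
    have hMh : VF.app L.conj' h P = ∑ j, starRingEnd ℂ (L.hol j P) * Dzbar j h P := by
      show ∑ j, L.conj'.hol j P * Dz j h P + ∑ j, L.conj'.anti j P * Dzbar j h P = _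
      simp only [hc0, zero_mul, Finset.sum_const_zero, zero_add, hMa]
    rw [S1, S2, S4, htangM P, sum_t_a hρ hρreal hgrad P, sum_ct_b hρ hρreal hgrad P, hMh]
    ring
  · -- the L case
    rw [alphaf_eq ρt L P hρtsm hρtreal hgrad' hLs,
        alphaf_eq ρ L P hρ hρreal hgrad hLs]
    simp only [hL10, zero_mul, Finset.sum_const_zero, add_zero]
    have T1 : ∀ j : Fin n, (Tf ρt).app (fun w => Dz j ρt w) P
        = (Tf ρ).app h P * Dz j ρ P + (Tf ρ).app (fun w => Dz j ρ w) P := by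
      intro j
      rw [hTtP, KEY1 (Tf ρ) hTρρ j]
      exact mul_div_cancel_left₀ _ (hgz P)
    have T2 : ∀ j : Fin n, (Lnf ρt).hol j P * VF.app L (fun w => Dz j ρt w) P
        = (Lnf ρ).hol j P * (VF.app L h P * Dz j ρ P + VF.app L (fun w => Dz j ρ w) P) := by
      intro j
      rw [httP, KEY1 L (htang P) j]
      field_simp
    have T4 : ∀ j : Fin n, starRingEnd ℂ ((Lnf ρt).hol j P)
          * VF.app L (fun w => Dzbar j ρt w) P
        = starRingEnd ℂ ((Lnf ρ).hol j P)
          * (VF.app L h P * Dzbar j ρ P + VF.app L (fun w => Dzbar j ρ w) P) := by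
      intro j
      rw [httP, map_div₀, hgconj, KEY2 L (htang P) j]
      field_simp
    simp only [T1, T2, T4]
    have S1 : ∑ j, L.hol j P
          * ((Tf ρ).app h P * Dz j ρ P + (Tf ρ).app (fun w => Dz j ρ w) P)
        = (Tf ρ).app h P * ∑ j, L.hol j P * Dz j ρ P
          + ∑ j, L.hol j P * (Tf ρ).app (fun w => Dz j ρ w) P := by
      rw [Finset.mul_sum, ← Finset.sum_add_distrib]
      exact Finset.sum_congr rfl fun j _ => by ring
    have S2 : ∑ j, (Lnf ρ).hol j P
          * (VF.app L h P * Dz j ρ P + VF.app L (fun w => Dz j ρ w) P)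
        = VF.app L h P * ∑ j, (Lnf ρ).hol j P * Dz j ρ P
          + ∑ j, (Lnf ρ).hol j P * VF.app L (fun w => Dz j ρ w) P := by
      rw [Finset.mul_sum, ← Finset.sum_add_distrib]
      exact Finset.sum_congr rfl fun j _ => by ring
    have S4 : ∑ j, starRingEnd ℂ ((Lnf ρ).hol j P)
          * (VF.app L h P * Dzbar j ρ P + VF.app L (fun w => Dzbar j ρ w) P)
        = VF.app L h P * ∑ j, starRingEnd ℂ ((Lnf ρ).hol j P) * Dzbar j ρ P
          + ∑ j, starRingEnd ℂ ((Lnf ρ).hol j P) * VF.app L (fun w => Dzbar j ρ w) P := by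
      rw [Finset.mul_sum, ← Finset.sum_add_distrib]
      exact Finset.sum_congr rfl fun j _ => by ring
    have hLh : VF.app L h P = ∑ j, L.hol j P * Dz j h P := by
      show ∑ j, L.hol j P * Dz j h P + ∑ j, L.anti j P * Dzbar j h P = _
      simp only [hL10, zero_mul, Finset.sum_const_zero, add_zero]
    rw [S1, S2, S4, htangL P, sum_t_a hρ hρreal hgrad P, sum_ct_b hρ hρreal hgrad P, hLh]
    ring
end
end

section
/- Let T : H₁ → H₂ and S : H₂ → H₃ be closed densely defined operators between Hilbert spaces with S∘T = 0, and suppose ‖u‖²_{H₂} ≤ C(‖T*u‖² + ‖Su‖²) for u ∈ dom T* ∩ dom S. Let N be the bounded inverse of □ = TT* + S*S. Then for every u ∈ ker S (i.e., Su = 0), the element v = T*Nu satisfies Tv = u, and v is the unique solution of Tv = u of minimal norm (the canonical solution); in particular v ⊥ ker T. -/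
open scoped InnerProductSpace

/-- Let T, S be closed densely defined operators with S∘T = 0 satisfying
‖u‖² ≤ C(‖T*u‖² + ‖Su‖²) on dom T* ∩ dom S, and let N be the bounded inverse of
□ = TT* + S*S. Then for every u with Su = 0, the element v = T*Nu solves Tv = u, is the unique
minimal-norm solution of this equation, and is orthogonal to ker T. -/
theorem stmt16 {H₁ H₂ H₃ : Type*}
    [NormedAddCommGroup H₁] [InnerProductSpace ℂ H₁] [CompleteSpace H₁]
    [NormedAddCommGroup H₂] [InnerProductSpace ℂ H₂] [CompleteSpace H₂]
    [NormedAddCommGroup H₃] [InnerProductSpace ℂ H₃] [CompleteSpace H₃]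
    (T : H₁ →ₗ.[ℂ] H₂) (S : H₂ →ₗ.[ℂ] H₃)
    (hTclosed : T.IsClosed) (hTdense : Dense (T.domain : Set H₁))
    (hSclosed : S.IsClosed) (hSdense : Dense (S.domain : Set H₂))
    -- S ∘ T = 0
    (hST : ∀ x : T.domain, ∃ h : T x ∈ S.domain, S ⟨T x, h⟩ = 0)
    (C : ℝ) (hC : 0 < C)
    -- the basic estimate on dom T* ∩ dom S
    (hest : ∀ (u : H₂) (h₁ : u ∈ T.adjoint.domain) (h₂ : u ∈ S.domain),
      ‖u‖ ^ 2 ≤ C * (‖T.adjoint ⟨u, h₁⟩‖ ^ 2 + ‖S ⟨u, h₂⟩‖ ^ 2))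
    -- N is the bounded inverse of □ = TT* + S*S
    (N : H₂ →L[ℂ] H₂)
    (hN : ∀ v : H₂, ∃ (h₁ : N v ∈ T.adjoint.domain) (h₂ : N v ∈ S.domain)
        (h₃ : T.adjoint ⟨N v, h₁⟩ ∈ T.domain) (h₄ : S ⟨N v, h₂⟩ ∈ S.adjoint.domain),
      T ⟨T.adjoint ⟨N v, h₁⟩, h₃⟩ + S.adjoint ⟨S ⟨N v, h₂⟩, h₄⟩ = v) :
    ∀ (u : H₂) (hu : u ∈ S.domain), S ⟨u, hu⟩ = 0 →
      ∃ (h₁ : N u ∈ T.adjoint.domain) (hv : T.adjoint ⟨N u, h₁⟩ ∈ T.domain),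
        -- v = T*Nu solves Tv = u
        T ⟨T.adjoint ⟨N u, h₁⟩, hv⟩ = u
        -- v is the unique minimal-norm solution
        ∧ (∀ (w : H₁) (hw : w ∈ T.domain), T ⟨w, hw⟩ = u →
            ‖T.adjoint ⟨N u, h₁⟩‖ ≤ ‖w‖
              ∧ (w ≠ T.adjoint ⟨N u, h₁⟩ → ‖T.adjoint ⟨N u, h₁⟩‖ < ‖w‖))
        -- v is orthogonal to ker T
        ∧ (∀ (w : H₁) (hw : w ∈ T.domain), T ⟨w, hw⟩ = 0 →
            (inner ℂ (T.adjoint ⟨N u, h₁⟩) w : ℂ) = 0) := by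
  intro u hu hSu
  obtain ⟨h₁, h₂, h₃, h₄, heq⟩ := hN u
  refine ⟨h₁, h₃, ?_⟩
  set v : H₁ := T.adjoint ⟨N u, h₁⟩ with hv
  -- T v ∈ dom S and S (T v) = 0
  obtain ⟨hTv, hSTv⟩ := hST ⟨v, h₃⟩
  -- a := S* (S N u) = u - T v, lies in dom S, and S a = 0
  set a : H₂ := S.adjoint ⟨S ⟨N u, h₂⟩, h₄⟩ with ha
  have haeq : a = u - T ⟨v, h₃⟩ := by
    rw [eq_sub_iff_add_eq, add_comm]; exact heq
  have hadom : a ∈ S.domain := haeq ▸ sub_mem hu hTv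
  have hSa : S ⟨a, hadom⟩ = 0 := by
    have hsub : (⟨a, hadom⟩ : S.domain) = ⟨u, hu⟩ - ⟨T ⟨v, h₃⟩, hTv⟩ := by
      ext; simp [haeq]
    rw [hsub, S.map_sub, hSu, hSTv, sub_zero]
  -- a = 0 via the formal adjoint property
  have hfaS := LinearPMap.adjoint_isFormalAdjoint hSdense
  have hinner : (inner ℂ a a : ℂ) = 0 := by
    have h5 := hfaS ⟨S ⟨N u, h₂⟩, h₄⟩ ⟨a, hadom⟩
    rw [hSa, inner_zero_right] at h5
    simpa [← ha] using h5
  have ha0 : a = 0 := inner_self_eq_zero.mp hinner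
  have hsol : T ⟨v, h₃⟩ = u := by
    have h6 := haeq; rw [ha0] at h6
    exact (sub_eq_zero.mp h6.symm).symm
  -- orthogonality to ker T
  have hfaT := LinearPMap.adjoint_isFormalAdjoint hTdense
  have horth : ∀ (w : H₁) (hw : w ∈ T.domain), T ⟨w, hw⟩ = 0 →
      (inner ℂ v w : ℂ) = 0 := by
    intro w hw hTw
    have h7 := hfaT ⟨N u, h₁⟩ ⟨w, hw⟩
    rw [hTw, inner_zero_right] at h7
    exact h7
  refine ⟨hsol, ?_, horth⟩
  -- minimal norm
  intro w hw hTwu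
  have hd : w - v ∈ T.domain := sub_mem hw h₃
  have hTd : T ⟨w - v, hd⟩ = 0 := by
    have hsub : (⟨w - v, hd⟩ : T.domain) = ⟨w, hw⟩ - ⟨v, h₃⟩ := rfl
    rw [hsub, T.map_sub, hTwu, hsol, sub_self]
  have hperp : (inner ℂ v (w - v) : ℂ) = 0 := horth _ hd hTd
  have hpyth : ‖w‖ ^ 2 = ‖v‖ ^ 2 + ‖w - v‖ ^ 2 := by
    have : w = v + (w - v) := by abel
    rw [this, @norm_add_sq ℂ, hperp]
    simp
  have h1 : ‖v‖ ≤ ‖w‖ := by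
    have := sq_nonneg ‖w - v‖
    nlinarith [norm_nonneg v, norm_nonneg w]
  refine ⟨h1, fun hne => ?_⟩
  have : 0 < ‖w - v‖ := by
    rw [norm_pos_iff, sub_ne_zero]; exact hne
  nlinarith [norm_nonneg v, norm_nonneg w]
end
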